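/- Strong gauge duality for fevc: under the conic assumptions, for every Z ∈ K* the infimum defining fevc(Z) is attained, and fevc(Z) = max{⟨Z,X⟩ : X ∈ K, s_Uᵀ X s_U ≤ 1 for all U ∈ F(A)}, with this maximum also attained. In particular, fevc is the dual gauge of maxq. -/

import Mathlib

open Matrix Finset

noncomputable section

/-- The trace inner product `⟨X,Y⟩ = tr(XY)` on symmetric matrices. -/
def ip {n : ℕ} (X Y : Matrix (Fin n) (Fin n) ℝ) : ℝ := (X * Y).trace

/-- The signed incidence vector `s_U ∈ {±1}ⁿ` of `U ⊆ [n]`. -/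
def sgn {n : ℕ} (U : Finset (Fin n)) : Fin n → ℝ := fun i => if i ∈ U then 1 else -1

/-- The rank-one sign matrix `s_U s_Uᵀ`. -/
def stensor {n : ℕ} (U : Finset (Fin n)) : Matrix (Fin n) (Fin n) ℝ :=
  fun i j => sgn U i * sgn U j

/-- The quadratic form `vᵀ W v`. -/
def qform {n : ℕ} (W : Matrix (Fin n) (Fin n) ℝ) (v : Fin n → ℝ) : ℝ :=
  ∑ i, ∑ j, v i * W i j * v j

/-- The dual cone (within the space `Sym(n)` of symmetric matrices) of a set `S ⊆ Sym(n)`. -/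
def dualSet {n : ℕ} (S : Set (Matrix (Fin n) (Fin n) ℝ)) : Set (Matrix (Fin n) (Fin n) ℝ) :=
  {X | X.IsSymm ∧ ∀ Y ∈ S, 0 ≤ ip X Y}

/-- The data of the conic framework: closed convex cones `A`, `K̂` of symmetric matrices,
and a linear map `L`. -/
structure ConicSetting (n k : ℕ) where
  A : Set (Matrix (Fin n) (Fin n) ℝ)
  Khat : Set (Matrix (Fin n) (Fin n) ℝ)
  L : Matrix (Fin n) (Fin n) ℝ →ₗ[ℝ] (Fin k → ℝ)
  A_symm : ∀ X ∈ A, X.IsSymm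
  A_closed : IsClosed A
  A_smul : ∀ c : ℝ, 0 ≤ c → ∀ X ∈ A, c • X ∈ A
  A_add : ∀ X ∈ A, ∀ Y ∈ A, X + Y ∈ A
  Khat_symm : ∀ X ∈ Khat, X.IsSymm
  Khat_closed : IsClosed Khat
  Khat_smul : ∀ c : ℝ, 0 ≤ c → ∀ X ∈ Khat, c • X ∈ Khat
  Khat_add : ∀ X ∈ Khat, ∀ Y ∈ Khat, X + Y ∈ Khat

namespace ConicSetting

variable {n k : ℕ} (S : ConicSetting n k)

/-- `K := K̂ ∩ ker L`. -/
def K : Set (Matrix (Fin n) (Fin n) ℝ) := {X | X ∈ S.Khat ∧ S.L X = 0}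

/-- `F(A) := {U ⊆ [n] : s_U s_Uᵀ ∈ A}`. -/
def FA : Set (Finset (Fin n)) := {U | stensor U ∈ S.A}

/-- The range of the adjoint of `L` restricted to `Sym(n)`, i.e. the orthogonal complement
of `ker L ∩ Sym(n)` inside `Sym(n)`. -/
def rangeLstar : Set (Matrix (Fin n) (Fin n) ℝ) :=
  {Q | Q.IsSymm ∧ ∀ Y : Matrix (Fin n) (Fin n) ℝ, Y.IsSymm → S.L Y = 0 → ip Q Y = 0}

/-- `lift := K̂* + range(L*)`. -/
def lift : Set (Matrix (Fin n) (Fin n) ℝ) :=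
  {X | ∃ P ∈ dualSet S.Khat, ∃ Q ∈ S.rangeLstar, X = P + Q}

/-- `K* := {X ∈ ker L : ⟨X,Y⟩ ≥ 0 for all Y ∈ K}` (within `Sym(n)`). -/
def Kstar : Set (Matrix (Fin n) (Fin n) ℝ) :=
  {X | X.IsSymm ∧ S.L X = 0 ∧ ∀ Y ∈ S.K, 0 ≤ ip X Y}

/-- The convex cone generated by `CUT^A = conv{s_U s_Uᵀ : U ∈ F(A)}`. -/
def coneCUT : Set (Matrix (Fin n) (Fin n) ℝ) :=
  {X | ∃ y : Finset (Fin n) → ℝ, (∀ U, 0 ≤ y U) ∧ (∀ U, U ∉ S.FA → y U = 0) ∧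
    X = ∑ U : Finset (Fin n), y U • stensor U}

/-- The conic assumptions: `A ⊆ PSD(n)`, `K ⊆ A*`, `cone(CUT^A)` has nonempty interior in
`Sym(n)`, and `K̂` has a nonzero Slater point in `ker L` (interior taken in `Sym(n)`). -/
structure Assumptions : Prop where
  A_psd : ∀ X ∈ S.A, X.PosSemidef
  K_sub_Astar : S.K ⊆ dualSet S.A
  cut_interior : (interior {X : {M : Matrix (Fin n) (Fin n) ℝ // M.IsSymm} |
      (X : Matrix (Fin n) (Fin n) ℝ) ∈ S.coneCUT}).Nonempty
  Khat_slater : ∃ X : {M : Matrix (Fin n) (Fin n) ℝ // M.IsSymm},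
      (X : Matrix (Fin n) (Fin n) ℝ) ≠ 0 ∧
      X ∈ interior {M : {M : Matrix (Fin n) (Fin n) ℝ // M.IsSymm} |
        (M : Matrix (Fin n) (Fin n) ℝ) ∈ S.Khat} ∧
      S.L X = 0

/-- `maxq(W) := max{s_Uᵀ W s_U : U ∈ F(A)}`. -/
def maxq (W : Matrix (Fin n) (Fin n) ℝ) : ℝ :=
  sSup {r | ∃ U ∈ S.FA, r = qform W (sgn U)}

/-- `ν(W) := max{⟨W,Y⟩ : Y ∈ A, diag(Y) = 1}`. -/
def nu (W : Matrix (Fin n) (Fin n) ℝ) : ℝ :=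
  sSup {r | ∃ Y ∈ S.A, (∀ i, Y i i = 1) ∧ r = ip W Y}

/-- `y ∈ ℝ₊^{F(A)}` is a tensor sign cover for `Z`:
`∑_{U ∈ F(A)} y_U s_U s_Uᵀ ⪰_lift Z`. -/
def CoverFeas (Z : Matrix (Fin n) (Fin n) ℝ) (y : Finset (Fin n) → ℝ) : Prop :=
  (∀ U, 0 ≤ y U) ∧ (∀ U, U ∉ S.FA → y U = 0) ∧
  (∑ U : Finset (Fin n), y U • stensor U) - Z ∈ S.lift

/-- `fevc(Z)`: minimum total weight of a tensor sign cover of `Z`. -/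
def fevc (Z : Matrix (Fin n) (Fin n) ℝ) : ℝ :=
  sInf {r | ∃ y, S.CoverFeas Z y ∧ r = ∑ U : Finset (Fin n), y U}

/-- `ν°(Z) := inf{μ ≥ 0 : ∃ Y ∈ A, diag(Y) = μ·1, Y ⪰_lift Z}`. -/
def nuPolar (Z : Matrix (Fin n) (Fin n) ℝ) : ℝ :=
  sInf {μ | 0 ≤ μ ∧ ∃ Y ∈ S.A, (∀ i, Y i i = μ) ∧ Y - Z ∈ S.lift}

end ConicSetting

/-!
The maximum `m` of `⟨Z, X⟩` over the cut ball `{X ∈ K : s_Uᵀ X s_U ≤ 1 for all U ∈ F(A)}` is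
attained: the ball is closed, and it is bounded because an interior point `W = ∑ y_U s_U s_Uᵀ` of
`cone(CUT^A)` bounds every entry of `X ∈ K ⊆ cone(CUT^A)*` by a multiple of `⟨X, W⟩ ≤ ∑ y_U`.
Every cover has weight at least `m` since `lift ⊆ K*`. A cover of weight at most `m` exists
because `Z` cannot be separated from the closed convex set
`{∑ y_U s_U s_Uᵀ : y ≥ 0, ∑ y_U ≤ m} - lift`: the normal of a separating hyperplane lies in
`lift* ⊆ K̂ ∩ ker L` (the bipolar theorem, applied to `K̂` and to `ker L ∩ Sym(n)`), and a
rescaling of it would beat `m` on the cut ball. Closedness of `lift = K̂* + (ker L ∩ Sym(n))*` is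
where the Slater point `X̊` enters: the entries of `P ∈ K̂*` are bounded by a multiple of
`⟨P, X̊⟩`, so near any point of its closure `lift` is a compact set plus a closed one.
-/

open scoped Topology Pointwise

instance {m m' : Type*} : LocallyConvexSpace ℝ (Matrix m m' ℝ) :=
  inferInstanceAs (LocallyConvexSpace ℝ (m → m' → ℝ))

section TraceInnerProduct

variable {n : ℕ}

lemma ip_comm (X Y : Matrix (Fin n) (Fin n) ℝ) : ip X Y = ip Y X :=
  trace_mul_comm X Y

@[simp] lemma ip_zero_left (Y : Matrix (Fin n) (Fin n) ℝ) : ip 0 Y = 0 := by simp [ip]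

@[simp] lemma ip_zero_right (X : Matrix (Fin n) (Fin n) ℝ) : ip X 0 = 0 := by simp [ip]

lemma ip_add_left (X X' Y : Matrix (Fin n) (Fin n) ℝ) : ip (X + X') Y = ip X Y + ip X' Y := by
  simp [ip, Matrix.add_mul]

lemma ip_add_right (X Y Y' : Matrix (Fin n) (Fin n) ℝ) : ip X (Y + Y') = ip X Y + ip X Y' := by
  simp [ip, Matrix.mul_add]

lemma ip_smul_left (c : ℝ) (X Y : Matrix (Fin n) (Fin n) ℝ) : ip (c • X) Y = c * ip X Y := by
  simp [ip]

lemma ip_smul_right (c : ℝ) (X Y : Matrix (Fin n) (Fin n) ℝ) : ip X (c • Y) = c * ip X Y := by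
  simp [ip]

lemma ip_neg_left (X Y : Matrix (Fin n) (Fin n) ℝ) : ip (-X) Y = -ip X Y := by
  simp [ip]

lemma ip_neg_right (X Y : Matrix (Fin n) (Fin n) ℝ) : ip X (-Y) = -ip X Y := by
  simp [ip]

lemma ip_sub_left (X X' Y : Matrix (Fin n) (Fin n) ℝ) : ip (X - X') Y = ip X Y - ip X' Y := by
  simp [ip, Matrix.sub_mul]

lemma ip_sub_right (X Y Y' : Matrix (Fin n) (Fin n) ℝ) : ip X (Y - Y') = ip X Y - ip X Y' := by
  simp [ip, Matrix.mul_sub]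

lemma ip_sum_left {ι : Type*} (s : Finset ι) (X : ι → Matrix (Fin n) (Fin n) ℝ)
    (Y : Matrix (Fin n) (Fin n) ℝ) : ip (∑ i ∈ s, X i) Y = ∑ i ∈ s, ip (X i) Y := by
  simp [ip, Finset.sum_mul, trace_sum]

lemma ip_single_right (X : Matrix (Fin n) (Fin n) ℝ) (i j : Fin n) :
    ip X (single i j 1) = X j i := by
  simp [ip, trace_mul_single]

lemma ip_transpose_left {Y : Matrix (Fin n) (Fin n) ℝ} (hY : Y.IsSymm)
    (X : Matrix (Fin n) (Fin n) ℝ) : ip Xᵀ Y = ip X Y := by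
  rw [ip, ← trace_transpose, transpose_mul, transpose_transpose, hY.eq, ← ip, ip_comm]

lemma ip_stensor (U : Finset (Fin n)) (X : Matrix (Fin n) (Fin n) ℝ) :
    ip (stensor U) X = qform X (sgn U) := by
  simp only [ip, trace, Matrix.diag, mul_apply, stensor, qform]
  rw [Finset.sum_comm]
  exact Finset.sum_congr rfl fun i _ => Finset.sum_congr rfl fun j _ => by ring

lemma continuous_ip_left (Y : Matrix (Fin n) (Fin n) ℝ) :
    Continuous fun X : Matrix (Fin n) (Fin n) ℝ => ip X Y :=
  (continuous_id.matrix_mul continuous_const).matrix_trace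

lemma continuous_ip_right (X : Matrix (Fin n) (Fin n) ℝ) :
    Continuous fun Y : Matrix (Fin n) (Fin n) ℝ => ip X Y :=
  (continuous_const.matrix_mul continuous_id).matrix_trace

lemma isSymm_stensor (U : Finset (Fin n)) : (stensor U).IsSymm := by
  ext i j
  simp [stensor, mul_comm]

lemma isSymm_sum_smul_stensor (y : Finset (Fin n) → ℝ) : (∑ U, y U • stensor U).IsSymm := by
  simp only [IsSymm, transpose_sum, transpose_smul, (isSymm_stensor _).eq]

end TraceInnerProduct

section Separation

variable {n : ℕ}

lemma exists_ip_eq (f : Matrix (Fin n) (Fin n) ℝ →ₗ[ℝ] ℝ) :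
    ∃ G : Matrix (Fin n) (Fin n) ℝ, ∀ Y, f Y = ip G Y := by
  refine ⟨of fun i j => f (single j i 1), fun Y => ?_⟩
  conv_lhs => rw [matrix_eq_sum_single Y]
  rw [ip_comm]
  simp only [map_sum, ip, trace, Matrix.diag, mul_apply, of_apply]
  refine Finset.sum_congr rfl fun i _ => Finset.sum_congr rfl fun j _ => ?_
  rw [← smul_eq_mul, ← map_smul, smul_single, smul_eq_mul, mul_one]

lemma exists_isSymm_separating {C : Set (Matrix (Fin n) (Fin n) ℝ)}
    (hCs : ∀ Y ∈ C, Y.IsSymm) (hconv : Convex ℝ C) (hclosed : IsClosed C)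
    {X : Matrix (Fin n) (Fin n) ℝ} (hX : X.IsSymm) (hXC : X ∉ C) :
    ∃ G : Matrix (Fin n) (Fin n) ℝ, G.IsSymm ∧ ∃ u, ip G X < u ∧ ∀ Y ∈ C, u < ip G Y := by
  obtain ⟨f, u, hfX, hfC⟩ := geometric_hahn_banach_point_closed hconv hclosed hXC
  obtain ⟨G, hG⟩ := exists_ip_eq f.toLinearMap
  have hsymm : ∀ {Y}, Y.IsSymm → ip (G + Gᵀ) Y = 2 * f Y := fun hY => by
    rw [ip_add_left, ip_transpose_left hY, ← ContinuousLinearMap.coe_coe, hG]; ring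
  refine ⟨G + Gᵀ, by simp [IsSymm, add_comm], 2 * u, ?_, fun Y hY => ?_⟩
  · rw [hsymm hX]; linarith
  · rw [hsymm (hCs Y hY)]; linarith [hfC Y hY]

lemma ip_nonneg_of_forall_lt_ip {C : Set (Matrix (Fin n) (Fin n) ℝ)}
    (hsmul : ∀ c : ℝ, 0 ≤ c → ∀ Y ∈ C, c • Y ∈ C) {G : Matrix (Fin n) (Fin n) ℝ} {u : ℝ}
    (h : ∀ Y ∈ C, u < ip G Y) {Y : Matrix (Fin n) (Fin n) ℝ} (hY : Y ∈ C) : 0 ≤ ip G Y := by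
  by_contra! hneg
  have hc : 0 ≤ (|u| + 1) / -ip G Y := div_nonneg (by positivity) (neg_nonneg.mpr hneg.le)
  have := h _ (hsmul _ hc Y hY)
  rw [ip_smul_right, div_mul_eq_mul_div, div_neg, mul_div_cancel_right₀ _ hneg.ne] at this
  linarith [neg_abs_le u]

end Separation

section DualSet

variable {n : ℕ}

lemma isClosed_dualSet (T : Set (Matrix (Fin n) (Fin n) ℝ)) : IsClosed (dualSet T) := by
  have : dualSet T = {X | Xᵀ = X} ∩ ⋂ Y ∈ T, {X | 0 ≤ ip X Y} := by
    ext X; simp [dualSet, IsSymm]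
  rw [this]
  exact (isClosed_eq continuous_id.matrix_transpose continuous_id).inter
    (isClosed_biInter fun Y _ => isClosed_le continuous_const (continuous_ip_left Y))

lemma zero_mem_dualSet (T : Set (Matrix (Fin n) (Fin n) ℝ)) : 0 ∈ dualSet T :=
  ⟨by simp [IsSymm], fun _ _ => by simp⟩

lemma add_mem_dualSet {T : Set (Matrix (Fin n) (Fin n) ℝ)} {P Q : Matrix (Fin n) (Fin n) ℝ}
    (hP : P ∈ dualSet T) (hQ : Q ∈ dualSet T) : P + Q ∈ dualSet T :=
  ⟨hP.1.add hQ.1, fun Y hY => by rw [ip_add_left]; exact add_nonneg (hP.2 Y hY) (hQ.2 Y hY)⟩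

lemma smul_mem_dualSet {T : Set (Matrix (Fin n) (Fin n) ℝ)} {c : ℝ} (hc : 0 ≤ c)
    {P : Matrix (Fin n) (Fin n) ℝ} (hP : P ∈ dualSet T) : c • P ∈ dualSet T :=
  ⟨hP.1.smul c, fun Y hY => by rw [ip_smul_left]; exact mul_nonneg hc (hP.2 Y hY)⟩

lemma convex_dualSet (T : Set (Matrix (Fin n) (Fin n) ℝ)) : Convex ℝ (dualSet T) :=
  fun _ hP _ hQ _ _ ha hb _ => add_mem_dualSet (smul_mem_dualSet ha hP) (smul_mem_dualSet hb hQ)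

lemma dualSet_subset_dualSet {T T' : Set (Matrix (Fin n) (Fin n) ℝ)} (h : T ⊆ T') :
    dualSet T' ⊆ dualSet T :=
  fun _ hP => ⟨hP.1, fun Y hY => hP.2 Y (h hY)⟩

lemma dualSet_dualSet_subset {C : Set (Matrix (Fin n) (Fin n) ℝ)} (hCs : ∀ Y ∈ C, Y.IsSymm)
    (hconv : Convex ℝ C) (hclosed : IsClosed C) (h0 : 0 ∈ C)
    (hsmul : ∀ c : ℝ, 0 ≤ c → ∀ Y ∈ C, c • Y ∈ C) : dualSet (dualSet C) ⊆ C := by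
  intro X hX
  by_contra hXC
  obtain ⟨G, hG, u, hGX, hGC⟩ := exists_isSymm_separating hCs hconv hclosed hX.1 hXC
  have hu : u < 0 := by simpa using hGC 0 h0
  have hGdual : G ∈ dualSet C := ⟨hG, fun Y hY => ip_nonneg_of_forall_lt_ip hsmul hGC hY⟩
  linarith [hX.2 G hGdual, ip_comm X G]

end DualSet

section Interior

variable {n : ℕ}

lemma eventually_add_smul_mem_of_mem_interior {s : Set (Matrix (Fin n) (Fin n) ℝ)}
    {X : {M : Matrix (Fin n) (Fin n) ℝ // M.IsSymm}}
    (hX : X ∈ interior {M : {M : Matrix (Fin n) (Fin n) ℝ // M.IsSymm} | ↑M ∈ s})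
    {D : Matrix (Fin n) (Fin n) ℝ} (hD : D.IsSymm) :
    ∀ᶠ c in 𝓝 (0 : ℝ), (X : Matrix (Fin n) (Fin n) ℝ) + c • D ∈ s := by
  let path : ℝ → {M : Matrix (Fin n) (Fin n) ℝ // M.IsSymm} :=
    fun c => ⟨X + c • D, X.2.add (hD.smul c)⟩
  have hpath : Continuous path :=
    (continuous_const.add (continuous_id.smul continuous_const)).subtype_mk _
  have hpath0 : path 0 = X := Subtype.ext (by simp [path])
  exact (hpath.tendsto 0).eventually_mem (hpath0 ▸ mem_interior_iff_mem_nhds.mp hX)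

lemma exists_pos_mul_abs_apply_le_ip {s : Set (Matrix (Fin n) (Fin n) ℝ)}
    {X : {M : Matrix (Fin n) (Fin n) ℝ // M.IsSymm}}
    (hX : X ∈ interior {M : {M : Matrix (Fin n) (Fin n) ℝ // M.IsSymm} | ↑M ∈ s}) :
    ∃ δ > 0, ∀ P ∈ dualSet s, ∀ i j, δ * |P i j| ≤ ip P X := by
  let E : Fin n × Fin n → Matrix (Fin n) (Fin n) ℝ := fun p => single p.1 p.2 1 + single p.2 p.1 1
  have hE : ∀ p, (E p).IsSymm := fun p => by simp [E, IsSymm, transpose_single, add_comm]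
  have hev : ∀ᶠ c in 𝓝 (0 : ℝ), ∀ p, (X : Matrix (Fin n) (Fin n) ℝ) + c • E p ∈ s ∧
      (X : Matrix (Fin n) (Fin n) ℝ) + c • -E p ∈ s :=
    Filter.eventually_all.mpr fun p => (eventually_add_smul_mem_of_mem_interior hX (hE p)).and
      (eventually_add_smul_mem_of_mem_interior hX (hE p).neg)
  obtain ⟨c, hc, hcs⟩ := hev.exists_gt
  refine ⟨2 * c, by positivity, fun P hP i j => ?_⟩
  have hPE : ip P (E (i, j)) = 2 * P i j := by
    simp only [E, ip_add_right, ip_single_right, hP.1.apply i j]; ring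
  have h₁ := hP.2 _ (hcs (i, j)).1
  have h₂ := hP.2 _ (hcs (i, j)).2
  rw [ip_add_right, ip_smul_right, hPE] at h₁
  rw [ip_add_right, ip_smul_right, ip_neg_right, hPE] at h₂
  rcases abs_cases (P i j) with ⟨habs, -⟩ | ⟨habs, -⟩ <;> rw [habs] <;> linarith

lemma isCompact_of_forall_abs_apply_le {s : Set (Matrix (Fin n) (Fin n) ℝ)} (hs : IsClosed s)
    {C : ℝ} (h : ∀ X ∈ s, ∀ i j, |X i j| ≤ C) : IsCompact s :=
  (isCompact_univ_pi fun _ => isCompact_univ_pi fun _ => isCompact_Icc (a := -C) (b := C))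
    |>.of_isClosed_subset hs fun X hX i _ j _ => abs_le.mp (h X hX i j)

lemma isClosed_dualSet_add_dualSet {C D : Set (Matrix (Fin n) (Fin n) ℝ)}
    {X₀ : {M : Matrix (Fin n) (Fin n) ℝ // M.IsSymm}}
    (hX₀ : X₀ ∈ interior {M : {M : Matrix (Fin n) (Fin n) ℝ // M.IsSymm} | ↑M ∈ C})
    (hX₀D : (X₀ : Matrix (Fin n) (Fin n) ℝ) ∈ D) : IsClosed (dualSet C + dualSet D) := by
  obtain ⟨δ, hδ, hbound⟩ := exists_pos_mul_abs_apply_le_ip hX₀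
  set x₀ : Matrix (Fin n) (Fin n) ℝ := ↑X₀
  refine isClosed_of_closure_subset fun X hX => ?_
  let c := ip X x₀ + 1
  let B := dualSet C ∩ {P | ip P x₀ ≤ c}
  have hB : IsCompact B :=
    isCompact_of_forall_abs_apply_le
      ((isClosed_dualSet C).inter (isClosed_le (continuous_ip_left _) continuous_const))
      fun P hP i j => (le_div_iff₀' hδ).mpr ((hbound P hP.1 i j).trans hP.2)
  have hsub : {Y | ip Y x₀ < c} ∩ (dualSet C + dualSet D) ⊆ B + dualSet D := by
    rintro _ ⟨hlt, P, hP, Q, hQ, rfl⟩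
    refine Set.add_mem_add ⟨hP, ?_⟩ hQ
    have := hQ.2 _ hX₀D
    simp only [Set.mem_ofPred_eq, ip_add_left] at hlt ⊢
    linarith
  have hX' : X ∈ closure (B + dualSet D) :=
    closure_mono hsub ((isOpen_lt (continuous_ip_left _) continuous_const).inter_closure
      ⟨lt_add_one (ip X x₀), hX⟩)
  rw [((isClosed_dualSet D).add_left_of_isCompact hB).closure_eq] at hX'
  exact Set.add_subset_add_right Set.inter_subset_left hX'

end Interior

lemma exists_pos_forall_le_and_mul_le {ι : Type*} [Finite ι] (a : ι → ℝ) {m β : ℝ}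
    (hm : 0 ≤ m) (hβ : 0 < β) (h : ∀ i, m * a i < β) :
    ∃ t > 0, (∀ i, a i ≤ t) ∧ m * t ≤ β := by
  rcases hm.eq_or_lt with rfl | hm
  · obtain ⟨t, ht⟩ := Finite.bddAbove_range a
    exact ⟨max t 1, by positivity, fun i => (ht ⟨i, rfl⟩).trans (le_max_left _ _), by
      simpa using hβ.le⟩
  · exact ⟨β / m, by positivity, fun i => (le_div_iff₀' hm).2 (h i).le,
      (mul_div_cancel₀ _ hm.ne').le⟩

namespace ConicSetting

variable {n k : ℕ} (S : ConicSetting n k)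

def symmKer : Submodule ℝ (Matrix (Fin n) (Fin n) ℝ) where
  carrier := {Y | Y.IsSymm ∧ S.L Y = 0}
  add_mem' hX hY := ⟨hX.1.add hY.1, by rw [map_add, hX.2, hY.2, add_zero]⟩
  zero_mem' := ⟨by simp [IsSymm], map_zero _⟩
  smul_mem' c _ hX := ⟨hX.1.smul c, by rw [map_smul, hX.2, smul_zero]⟩

lemma isClosed_symmKer : IsClosed (S.symmKer : Set (Matrix (Fin n) (Fin n) ℝ)) :=
  S.symmKer.closed_of_finiteDimensional

lemma rangeLstar_eq_dualSet_symmKer : S.rangeLstar = dualSet S.symmKer := by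
  ext Q
  refine ⟨fun hQ => ⟨hQ.1, fun Y hY => (hQ.2 Y hY.1 hY.2).ge⟩,
    fun hQ => ⟨hQ.1, fun Y hYs hYL => ?_⟩⟩
  have h₁ := hQ.2 Y ⟨hYs, hYL⟩
  have h₂ := hQ.2 (-Y) (S.symmKer.neg_mem ⟨hYs, hYL⟩)
  rw [ip_neg_right] at h₂
  linarith

lemma lift_eq : S.lift = dualSet S.Khat + dualSet S.symmKer := by
  ext X
  simp only [lift, rangeLstar_eq_dualSet_symmKer, Set.mem_add, eq_comm, Set.mem_ofPred_eq]

lemma K_eq : S.K = S.Khat ∩ S.symmKer := by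
  ext X
  exact ⟨fun hX => ⟨hX.1, S.Khat_symm X hX.1, hX.2⟩, fun hX => ⟨hX.1, hX.2.2⟩⟩

lemma convex_Khat : Convex ℝ S.Khat := fun _ hX _ hY _ _ ha hb _ =>
  S.Khat_add _ (S.Khat_smul _ ha _ hX) _ (S.Khat_smul _ hb _ hY)

lemma zero_mem_Khat (hS : S.Assumptions) : 0 ∈ S.Khat := by
  obtain ⟨X, -, hX, -⟩ := hS.Khat_slater
  simpa using S.Khat_smul 0 le_rfl X (interior_subset hX : X ∈ {M | ↑M ∈ S.Khat})

lemma isClosed_K : IsClosed S.K := by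
  rw [K_eq]
  exact S.Khat_closed.inter S.isClosed_symmKer

lemma smul_mem_K {c : ℝ} (hc : 0 ≤ c) {X : Matrix (Fin n) (Fin n) ℝ} (hX : X ∈ S.K) :
    c • X ∈ S.K :=
  ⟨S.Khat_smul c hc X hX.1, by rw [map_smul, hX.2, smul_zero]⟩

lemma lift_subset_dualSet_K : S.lift ⊆ dualSet S.K := by
  rw [lift_eq, K_eq]
  rintro _ ⟨P, hP, Q, hQ, rfl⟩
  exact add_mem_dualSet (dualSet_subset_dualSet Set.inter_subset_left hP)
    (dualSet_subset_dualSet Set.inter_subset_right hQ)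

lemma dualSet_lift_subset_K (hS : S.Assumptions) : dualSet S.lift ⊆ S.K := by
  rw [K_eq]
  intro G hG
  refine ⟨dualSet_dualSet_subset S.Khat_symm S.convex_Khat S.Khat_closed (S.zero_mem_Khat hS)
      S.Khat_smul (dualSet_subset_dualSet (fun P hP => ?_) hG),
    dualSet_dualSet_subset (fun Y hY => hY.1) S.symmKer.convex S.isClosed_symmKer
      S.symmKer.zero_mem (fun c _ Y hY => S.symmKer.smul_mem c hY)
      (dualSet_subset_dualSet (fun Q hQ => ?_) hG)⟩
  · exact S.lift_eq ▸ ⟨P, hP, 0, zero_mem_dualSet _, add_zero P⟩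
  · exact S.lift_eq ▸ ⟨0, zero_mem_dualSet _, Q, hQ, zero_add Q⟩

lemma zero_mem_lift : 0 ∈ S.lift :=
  S.lift_eq ▸ ⟨0, zero_mem_dualSet _, 0, zero_mem_dualSet _, add_zero 0⟩

lemma smul_mem_lift {c : ℝ} (hc : 0 ≤ c) {X : Matrix (Fin n) (Fin n) ℝ} (hX : X ∈ S.lift) :
    c • X ∈ S.lift := by
  rw [lift_eq] at hX ⊢
  obtain ⟨P, hP, Q, hQ, rfl⟩ := hX
  exact ⟨c • P, smul_mem_dualSet hc hP, c • Q, smul_mem_dualSet hc hQ, (smul_add c P Q).symm⟩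

lemma convex_lift : Convex ℝ S.lift :=
  S.lift_eq ▸ (convex_dualSet _).add (convex_dualSet _)

lemma isSymm_of_mem_lift {X : Matrix (Fin n) (Fin n) ℝ} (hX : X ∈ S.lift) : X.IsSymm := by
  rw [lift_eq] at hX
  obtain ⟨P, hP, Q, hQ, rfl⟩ := hX
  exact hP.1.add hQ.1

lemma isClosed_lift (hS : S.Assumptions) : IsClosed S.lift := by
  obtain ⟨X₀, -, hX₀, hX₀L⟩ := hS.Khat_slater
  rw [lift_eq]
  exact isClosed_dualSet_add_dualSet hX₀ ⟨X₀.2, hX₀L⟩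

def cutBall : Set (Matrix (Fin n) (Fin n) ℝ) :=
  {X | X ∈ S.K ∧ ∀ U ∈ S.FA, qform X (sgn U) ≤ 1}

def coverWeights (m : ℝ) : Set (Finset (Fin n) → ℝ) :=
  {y | (∀ U, 0 ≤ y U) ∧ (∀ U, U ∉ S.FA → y U = 0) ∧ ∑ U, y U ≤ m}

def coverable (m : ℝ) : Set (Matrix (Fin n) (Fin n) ℝ) :=
  {Z | ∃ y ∈ S.coverWeights m, (∑ U, y U • stensor U) - Z ∈ S.lift}

lemma qform_nonneg_of_mem_K (hS : S.Assumptions) {X : Matrix (Fin n) (Fin n) ℝ} (hX : X ∈ S.K)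
    {U : Finset (Fin n)} (hU : U ∈ S.FA) : 0 ≤ qform X (sgn U) := by
  rw [← ip_stensor, ip_comm]
  exact (hS.K_sub_Astar hX).2 _ hU

lemma K_subset_dualSet_coneCUT (hS : S.Assumptions) : S.K ⊆ dualSet S.coneCUT := by
  intro X hX
  refine ⟨S.Khat_symm X hX.1, ?_⟩
  rintro _ ⟨y, hy0, hyF, rfl⟩
  rw [ip_comm, ip_sum_left]
  refine Finset.sum_nonneg fun U _ => ?_
  rw [ip_smul_left, ip_stensor]
  by_cases hU : U ∈ S.FA
  · exact mul_nonneg (hy0 U) (S.qform_nonneg_of_mem_K hS hX hU)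
  · rw [hyF U hU, zero_mul]

lemma ip_sum_smul_stensor_le {y : Finset (Fin n) → ℝ} (hy0 : ∀ U, 0 ≤ y U)
    (hyF : ∀ U, U ∉ S.FA → y U = 0) {X : Matrix (Fin n) (Fin n) ℝ}
    (hX : ∀ U ∈ S.FA, qform X (sgn U) ≤ 1) : ip (∑ U, y U • stensor U) X ≤ ∑ U, y U := by
  rw [ip_sum_left]
  refine Finset.sum_le_sum fun U _ => ?_
  rw [ip_smul_left, ip_stensor]
  by_cases hU : U ∈ S.FA
  · exact mul_le_of_le_one_right (hy0 U) (hX U hU)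
  · rw [hyF U hU, zero_mul]

lemma zero_mem_cutBall (hS : S.Assumptions) : 0 ∈ S.cutBall :=
  ⟨⟨S.zero_mem_Khat hS, map_zero _⟩, fun U _ => by simp [qform]⟩

lemma isCompact_cutBall (hS : S.Assumptions) : IsCompact S.cutBall := by
  obtain ⟨W, hW⟩ := hS.cut_interior
  obtain ⟨δ, hδ, hbound⟩ := exists_pos_mul_abs_apply_le_ip hW
  obtain ⟨y, hy0, hyF, hWy⟩ := (interior_subset hW : W ∈ {M | ↑M ∈ S.coneCUT})
  have hclosed : IsClosed S.cutBall := by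
    simp only [cutBall, Set.ofPred_and, Set.ofPred_mem_eq, Set.ofPred_forall]
    exact S.isClosed_K.inter (isClosed_iInter fun U => isClosed_iInter fun _ =>
      isClosed_le (by simpa only [ip_stensor] using continuous_ip_right (stensor U))
        continuous_const)
  refine isCompact_of_forall_abs_apply_le (C := (∑ U, y U) / δ) hclosed
    fun X hX i j => (le_div_iff₀' hδ).mpr ?_
  calc δ * |X i j| ≤ ip X W := hbound X (S.K_subset_dualSet_coneCUT hS hX.1) i j
    _ ≤ ∑ U, y U := by rw [hWy, ip_comm]; exact S.ip_sum_smul_stensor_le hy0 hyF hX.2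

lemma ip_le_sum_of_coverFeas {Z : Matrix (Fin n) (Fin n) ℝ} {y : Finset (Fin n) → ℝ}
    (hy : S.CoverFeas Z y) {X : Matrix (Fin n) (Fin n) ℝ} (hX : X ∈ S.cutBall) :
    ip Z X ≤ ∑ U, y U := by
  have h := (S.lift_subset_dualSet_K hy.2.2).2 X hX.1
  rw [ip_sub_left] at h
  linarith [S.ip_sum_smul_stensor_le hy.1 hy.2.1 hX.2]

lemma ip_le_mul_of_forall_qform_le {Z : Matrix (Fin n) (Fin n) ℝ} {m : ℝ}
    (hmax : ∀ X ∈ S.cutBall, ip Z X ≤ m) {X : Matrix (Fin n) (Fin n) ℝ} (hX : X ∈ S.K)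
    {t : ℝ} (ht : 0 < t) (hXt : ∀ U ∈ S.FA, qform X (sgn U) ≤ t) : ip Z X ≤ m * t := by
  have hball : t⁻¹ • X ∈ S.cutBall := by
    refine ⟨S.smul_mem_K (inv_nonneg.2 ht.le) hX, fun U hU => ?_⟩
    rw [← ip_stensor, ip_smul_right, ip_stensor]
    exact inv_mul_le_one_of_le₀ (hXt U hU) ht.le
  have h := hmax _ hball
  rwa [ip_smul_right, inv_mul_le_iff₀ ht, mul_comm] at h

lemma zero_mem_coverWeights {m : ℝ} (hm : 0 ≤ m) : 0 ∈ S.coverWeights m :=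
  ⟨fun _ => le_rfl, fun _ _ => rfl, by simpa using hm⟩

lemma single_mem_coverWeights {m : ℝ} (hm : 0 ≤ m) {U : Finset (Fin n)} (hU : U ∈ S.FA) :
    Pi.single U m ∈ S.coverWeights m := by
  refine ⟨fun V => ?_, fun V hV => ?_, by simp⟩
  · by_cases h : V = U <;> simp [h, hm]
  · simp [(ne_of_mem_of_not_mem hU hV).symm]

lemma isCompact_coverWeights (m : ℝ) : IsCompact (S.coverWeights m) := by
  have hclosed : IsClosed (S.coverWeights m) := by
    simp only [coverWeights, Set.ofPred_and, Set.ofPred_forall]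
    exact (isClosed_iInter fun U => isClosed_le continuous_const (continuous_apply U)).inter
      ((isClosed_iInter fun U => isClosed_iInter fun _ =>
        isClosed_eq (continuous_apply U) continuous_const).inter
      (isClosed_le (continuous_finsetSum _ fun U _ => continuous_apply U) continuous_const))
  refine (isCompact_univ_pi fun _ => isCompact_Icc (a := 0) (b := m)).of_isClosed_subset hclosed
    fun y hy U _ => ⟨hy.1 U, ?_⟩
  exact (Finset.single_le_sum (fun U _ => hy.1 U) (Finset.mem_univ U)).trans hy.2.2

lemma convex_coverWeights (m : ℝ) : Convex ℝ (S.coverWeights m) := by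
  rintro y ⟨hy0, hyF, hym⟩ z ⟨hz0, hzF, hzm⟩ a b ha hb hab
  refine ⟨fun U => ?_, fun U hU => ?_, ?_⟩
  · simp only [Pi.add_apply, Pi.smul_apply, smul_eq_mul]
    exact add_nonneg (mul_nonneg ha (hy0 U)) (mul_nonneg hb (hz0 U))
  · simp [hyF U hU, hzF U hU]
  · simp only [Pi.add_apply, Pi.smul_apply, smul_eq_mul, Finset.sum_add_distrib,
      ← Finset.mul_sum]
    calc a * ∑ U, y U + b * ∑ U, z U ≤ a * m + b * m :=
          add_le_add (mul_le_mul_of_nonneg_left hym ha) (mul_le_mul_of_nonneg_left hzm hb)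
      _ = m := by rw [← add_mul, hab, one_mul]

lemma sum_sub_mem_coverable {m : ℝ} {y : Finset (Fin n) → ℝ} (hy : y ∈ S.coverWeights m)
    {L : Matrix (Fin n) (Fin n) ℝ} (hL : L ∈ S.lift) :
    (∑ U, y U • stensor U) - L ∈ S.coverable m :=
  ⟨y, hy, by rwa [sub_sub_cancel]⟩

lemma coverable_eq (m : ℝ) :
    S.coverable m = Fintype.linearCombination ℝ stensor '' S.coverWeights m + -S.lift := by
  ext Z
  simp only [coverable, Set.mem_add, Set.mem_image, Set.mem_neg, Fintype.linearCombination_apply]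
  constructor
  · rintro ⟨y, hy, hL⟩
    exact ⟨_, ⟨y, hy, rfl⟩, Z - ∑ U, y U • stensor U, by rwa [neg_sub], add_sub_cancel _ _⟩
  · rintro ⟨_, ⟨y, hy, rfl⟩, L, hL, rfl⟩
    exact ⟨y, hy, by rwa [sub_add_cancel_left]⟩

lemma isClosed_coverable (hS : S.Assumptions) (m : ℝ) : IsClosed (S.coverable m) :=
  S.coverable_eq m ▸ (S.isClosed_lift hS).neg.add_left_of_isCompact
    ((S.isCompact_coverWeights m).image
      (Fintype.linearCombination ℝ stensor).continuous_of_finiteDimensional)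

lemma convex_coverable (m : ℝ) : Convex ℝ (S.coverable m) :=
  S.coverable_eq m ▸ ((S.convex_coverWeights m).linear_image _).add S.convex_lift.neg

lemma isSymm_of_mem_coverable {m : ℝ} {Z : Matrix (Fin n) (Fin n) ℝ} (hZ : Z ∈ S.coverable m) :
    Z.IsSymm := by
  obtain ⟨y, -, hL⟩ := hZ
  simpa using (isSymm_sum_smul_stensor y).sub (S.isSymm_of_mem_lift hL)

lemma mem_coverable_of_forall_ip_le (hS : S.Assumptions) {Z : Matrix (Fin n) (Fin n) ℝ} (hZ : Z.IsSymm) {m : ℝ}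
    (hm : 0 ≤ m) (hmax : ∀ X ∈ S.cutBall, ip Z X ≤ m) : Z ∈ S.coverable m := by
  by_contra hZm
  obtain ⟨G, hG, u, hGZ, hGm⟩ := exists_isSymm_separating (fun _ => S.isSymm_of_mem_coverable)
    (S.convex_coverable m) (S.isClosed_coverable hS m) hZ hZm
  have hsep : ∀ {y L}, y ∈ S.coverWeights m → L ∈ S.lift →
      u < ip G (∑ U, y U • stensor U) - ip G L := fun hy hL => by
    simpa [ip_sub_right] using hGm _ (S.sum_sub_mem_coverable hy hL)
  have hu : u < 0 := by simpa using hsep (S.zero_mem_coverWeights hm) S.zero_mem_lift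
  have hH : -G ∈ S.K := S.dualSet_lift_subset_K hS ⟨hG.neg, fun L hL =>
    ip_nonneg_of_forall_lt_ip (fun _ hc _ => S.smul_mem_lift hc)
      (fun L' hL' => by simpa [ip_neg_left] using hsep (S.zero_mem_coverWeights hm) hL') hL⟩
  have hcut : ∀ U : S.FA, m * qform (-G) (sgn U) < -u := fun ⟨U, hU⟩ => by
    have := hsep (S.single_mem_coverWeights hm hU) S.zero_mem_lift
    rw [← ip_stensor, ip_neg_right, ip_comm]
    simpa [Pi.single_apply, ip_smul_right] using this
  -- `t⁻¹ • -G` lies in the cut ball, where it would take a value `> m`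
  obtain ⟨t, ht, hqt, hmt⟩ := exists_pos_forall_le_and_mul_le _ hm (neg_pos.2 hu) hcut
  have := S.ip_le_mul_of_forall_qform_le hmax hH ht fun U hU => hqt ⟨U, hU⟩
  rw [ip_neg_right, ip_comm] at this
  linarith

lemma fevc_eq_of_coverFeas {Z : Matrix (Fin n) (Fin n) ℝ} {y : Finset (Fin n) → ℝ}
    (hy : S.CoverFeas Z y) {X : Matrix (Fin n) (Fin n) ℝ} (hX : X ∈ S.cutBall)
    (h : ∑ U, y U = ip Z X) : S.fevc Z = ip Z X :=
  h ▸ IsLeast.csInf_eq ⟨⟨y, hy, rfl⟩, by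
    rintro _ ⟨y', hy', rfl⟩
    exact h ▸ S.ip_le_sum_of_coverFeas hy' hX⟩

end ConicSetting

theorem fevc_strong_gauge_duality_general {n k : ℕ} (S : ConicSetting n k)
    (hS : S.Assumptions) (Z : Matrix (Fin n) (Fin n) ℝ) (hZ : Z ∈ S.Kstar) :
    (∃ y : Finset (Fin n) → ℝ, S.CoverFeas Z y ∧
      (∑ U : Finset (Fin n), y U) = S.fevc Z) ∧
    (∃ X ∈ S.K, (∀ U ∈ S.FA, qform X (sgn U) ≤ 1) ∧ ip Z X = S.fevc Z ∧
      ∀ X' ∈ S.K, (∀ U ∈ S.FA, qform X' (sgn U) ≤ 1) → ip Z X' ≤ S.fevc Z) := by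
  obtain ⟨X, hX, hXmax⟩ := (S.isCompact_cutBall hS).exists_isMaxOn ⟨0, S.zero_mem_cutBall hS⟩
    (continuous_ip_right Z).continuousOn
  have hmax : ∀ X' ∈ S.cutBall, ip Z X' ≤ ip Z X := fun _ hX' => hXmax hX'
  obtain ⟨y, hy, hL⟩ :=
    S.mem_coverable_of_forall_ip_le hS hZ.1 (by simpa using hmax 0 (S.zero_mem_cutBall hS)) hmax
  have hcover : S.CoverFeas Z y := ⟨hy.1, hy.2.1, hL⟩
  have hsum : ∑ U, y U = ip Z X := le_antisymm hy.2.2 (S.ip_le_sum_of_coverFeas hcover hX)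
  have hfevc := S.fevc_eq_of_coverFeas hcover hX hsum
  exact ⟨⟨y, hcover, hsum.trans hfevc.symm⟩, X, hX.1, hX.2, hfevc.symm,
    fun X' hX' hX'q => hfevc ▸ hmax X' ⟨hX', hX'q⟩⟩

/-- strong gauge duality for `fevc`: under the conic assumptions, for
every `Z ∈ K*` the infimum defining `fevc(Z)` is attained, and `fevc(Z)` equals
`max{⟨Z,X⟩ : X ∈ K, s_Uᵀ X s_U ≤ 1 for all U ∈ F(A)}`, the maximum being attained.
In particular `fevc` is the dual gauge of `maxq`. -/
theorem fevc_strong_gauge_duality {n k : ℕ} (hn : 1 ≤ n) (S : ConicSetting n k)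
    (hS : S.Assumptions) (Z : Matrix (Fin n) (Fin n) ℝ) (hZ : Z ∈ S.Kstar) :
    (∃ y : Finset (Fin n) → ℝ, S.CoverFeas Z y ∧
      (∑ U : Finset (Fin n), y U) = S.fevc Z) ∧
    (∃ X ∈ S.K, (∀ U ∈ S.FA, qform X (sgn U) ≤ 1) ∧ ip Z X = S.fevc Z ∧
      ∀ X' ∈ S.K, (∀ U ∈ S.FA, qform X' (sgn U) ≤ 1) → ip Z X' ≤ S.fevc Z) :=
  fevc_strong_gauge_duality_general S hS Z hZ
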